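/- Full loading of IFDMA is possible: let m ≥ 0 and let a_0, a_1, ..., a_m be nonnegative integers with Σ_{n=0}^{m} a_n·2^n ≤ 2^m. Then there exists a partition of a subset of {0,...,2^m−1} into pairwise disjoint sets S_1,...,S_K (one set for each request, where K = Σ a_n and exactly a_n of the sets have size 2^n) such that each set of size 2^n is of the form {d + j·2^{m−n} : j = 0,...,2^n−1} for some d ∈ {0,...,2^{m−n}−1} (i.e., each set is evenly spaced with spacing 2^{m−n}). -/

import Mathlib

/-!
A set `{d + j * 2 ^ (m - n) : j < 2 ^ n}` with `d < 2 ^ (m - n)` is the residue class of `d`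
modulo `2 ^ (m - n)` inside `[0, 2 ^ m)`, and for `n ≤ n'` two such classes meet iff
`d ≡ d' [MOD 2 ^ (m - n')]`. Reversing the `m - n` low bits of `d` turns these residue classes
into the aligned dyadic intervals `[q * 2 ^ n, (q + 1) * 2 ^ n)`, and the two classes meet iff the
interval of the smaller request lies inside that of the larger one. So it suffices to pack the
requests as aligned dyadic intervals in `[0, 2 ^ m)`, which the greedy layout does: place them
consecutively, largest first, so every block starts at a multiple of its own length.
-/

open Finset

/-- `bitRev w x` reverses the `w` low bits of `x`. -/
def bitRev : ℕ → ℕ → ℕ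
  | 0, _ => 0
  | w + 1, x => x % 2 * 2 ^ w + bitRev w (x / 2)

theorem bitRev_lt (w x : ℕ) : bitRev w x < 2 ^ w := by
  induction w generalizing x with
  | zero => simp [bitRev]
  | succ w ih =>
    have := ih (x / 2)
    rcases Nat.mod_two_eq_zero_or_one x with h | h <;> simp [bitRev, h, pow_succ] <;> omega

theorem bitRev_mod_two_pow {w' w : ℕ} (x : ℕ) (h : w' ≤ w) :
    bitRev w x % 2 ^ w' = bitRev w' (x / 2 ^ (w - w')) := by
  induction w generalizing x with
  | zero => simp [Nat.le_zero.mp h, bitRev]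
  | succ w ih =>
    rcases h.eq_or_lt with rfl | hlt
    · simp [Nat.mod_eq_of_lt (bitRev_lt _ _)]
    · obtain ⟨c, hc⟩ : 2 ^ w' ∣ x % 2 * 2 ^ w := (pow_dvd_pow 2 (by omega)).mul_left _
      rw [bitRev, hc, Nat.mul_add_mod, ih _ (by omega), Nat.div_div_eq_div_mul,
        ← pow_succ', show w - w' + 1 = w + 1 - w' by omega]

theorem bitRev_injOn (w : ℕ) : Set.InjOn (bitRev w) (Set.Iio (2 ^ w)) := by
  induction w with
  | zero => intro x hx y hy _; simp_all
  | succ w ih =>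
    intro x hx y hy h
    simp only [Set.mem_Iio, pow_succ] at hx hy
    have hx' := bitRev_lt w (x / 2)
    have hy' := bitRev_lt w (y / 2)
    simp only [bitRev] at h
    have hbit : x % 2 = y % 2 := by
      rcases Nat.mod_two_eq_zero_or_one x with h₁ | h₁ <;>
        rcases Nat.mod_two_eq_zero_or_one y with h₂ | h₂ <;>
        simp only [h₁, h₂, zero_mul, one_mul, zero_add] at h ⊢ <;> omega
    have hhalf : x / 2 = y / 2 := by
      rw [hbit] at h
      exact ih (show x / 2 < 2 ^ w by omega) (show y / 2 < 2 ^ w by omega) (by omega)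
    omega

/-- Bit reversal turns "the dyadic interval of `q` at level `w` is not inside that of `q'` at
level `w'`" into "the reversed indices are incongruent modulo `2 ^ w'`". -/
theorem bitRev_mod_two_pow_ne {w w' q q' : ℕ} (hw : w' ≤ w) (hq : q < 2 ^ w) (hq' : q' < 2 ^ w')
    (hne : q / 2 ^ (w - w') ≠ q') : bitRev w q % 2 ^ w' ≠ bitRev w' q' % 2 ^ w' := by
  rw [bitRev_mod_two_pow q hw, Nat.mod_eq_of_lt (bitRev_lt _ _)]
  refine fun h => hne (bitRev_injOn w' ?_ hq' h)
  rw [Set.mem_Iio, Nat.div_lt_iff_lt_mul (by positivity), ← pow_add, Nat.add_sub_cancel' hw]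
  exact hq

theorem disjoint_image_add_mul_of_mod_ne {d d' s s' : ℕ} (t t' : Finset ℕ) (hs : s' ∣ s)
    (h : d % s' ≠ d' % s') :
    Disjoint (t.image fun j => d + j * s) (t'.image fun j => d' + j * s') := by
  obtain ⟨c, rfl⟩ := hs
  simp only [disjoint_left, mem_image]
  rintro _ ⟨j, -, rfl⟩ ⟨j', -, he⟩
  apply h
  have := congrArg (· % s') he
  simp only [Nat.add_mul_mod_self_right] at this
  rwa [← mul_assoc, Nat.mul_right_comm, Nat.add_mul_mod_self_right, eq_comm] at this

section GreedyLayout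

variable (m : ℕ) (a : ℕ → ℕ)

def largerLoad (n : ℕ) : ℕ := ∑ k ∈ Ico (n + 1) (m + 1), a k * 2 ^ k

/-- The `i`-th request of size `2 ^ n` occupies `[q * 2 ^ n, (q + 1) * 2 ^ n)` for this `q`. -/
def greedyIndex (n i : ℕ) : ℕ := i + ∑ k ∈ Ico (n + 1) (m + 1), a k * 2 ^ (k - n)

theorem greedyIndex_mul_two_pow (n i : ℕ) :
    greedyIndex m a n i * 2 ^ n = i * 2 ^ n + largerLoad m a n := by
  rw [greedyIndex, largerLoad, add_mul, sum_mul]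
  congr 1
  refine sum_congr rfl fun k hk => ?_
  rw [mul_assoc, ← pow_add, Nat.sub_add_cancel (by simp at hk; omega)]

theorem sum_Ico_eq_add_largerLoad {n : ℕ} (hn : n ≤ m) :
    ∑ k ∈ Ico n (m + 1), a k * 2 ^ k = a n * 2 ^ n + largerLoad m a n :=
  sum_eq_sum_Ico_succ_bot (by omega) _

theorem add_largerLoad_le_largerLoad {n n' : ℕ} (h : n < n') (h' : n' ≤ m) :
    a n' * 2 ^ n' + largerLoad m a n' ≤ largerLoad m a n := by
  rw [← sum_Ico_eq_add_largerLoad m a h']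
  exact sum_le_sum_of_subset (Ico_subset_Ico h le_rfl)

theorem greedyIndex_lt (hsum : ∑ n ∈ range (m + 1), a n * 2 ^ n ≤ 2 ^ m) {n i : ℕ}
    (hn : n ≤ m) (hi : i < a n) : greedyIndex m a n i < 2 ^ (m - n) := by
  have hload : (greedyIndex m a n i + 1) * 2 ^ n ≤ 2 ^ (m - n) * 2 ^ n :=
    calc (greedyIndex m a n i + 1) * 2 ^ n = (i + 1) * 2 ^ n + largerLoad m a n := by
          rw [add_mul, greedyIndex_mul_two_pow]; ring
      _ ≤ a n * 2 ^ n + largerLoad m a n := by gcongr; omega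
      _ = ∑ k ∈ Ico n (m + 1), a k * 2 ^ k := (sum_Ico_eq_add_largerLoad m a hn).symm
      _ ≤ ∑ k ∈ range (m + 1), a k * 2 ^ k := by
          rw [range_eq_Ico]; exact sum_le_sum_of_subset (Ico_subset_Ico n.zero_le le_rfl)
      _ ≤ 2 ^ (m - n) * 2 ^ n := by rwa [← pow_add, Nat.sub_add_cancel hn]
  exact Nat.lt_of_succ_le (Nat.le_of_mul_le_mul_right hload (by positivity))

theorem greedyIndex_div_ne {n n' i i' : ℕ} (h : n ≤ n') (h' : n' ≤ m) (hi' : i' < a n')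
    (hne : (n, i) ≠ (n', i')) : greedyIndex m a n i / 2 ^ (n' - n) ≠ greedyIndex m a n' i' := by
  rcases h.eq_or_lt with rfl | hlt
  · simpa [greedyIndex] using hne
  · refine (Nat.lt_of_succ_le ?_).ne'
    rw [Nat.le_div_iff_mul_le (by positivity)]
    refine Nat.le_of_mul_le_mul_right ?_ (show 0 < 2 ^ n by positivity)
    calc (greedyIndex m a n' i' + 1) * 2 ^ (n' - n) * 2 ^ n
        = (i' + 1) * 2 ^ n' + largerLoad m a n' := by
          rw [mul_assoc, ← pow_add, Nat.sub_add_cancel h, add_mul, greedyIndex_mul_two_pow]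
          ring
      _ ≤ a n' * 2 ^ n' + largerLoad m a n' := by gcongr; omega
      _ ≤ largerLoad m a n := add_largerLoad_le_largerLoad m a hlt h'
      _ ≤ greedyIndex m a n i * 2 ^ n := by rw [greedyIndex_mul_two_pow]; omega

end GreedyLayout

/-- Full loading is possible: if requests of power-of-2 sizes (with `a n` requests of
size `2^n`, `n = 0,…,m`) have total size at most `2^m`, then each request `(n,i)`
(with `i < a n`) can be assigned an offset `d n i < 2^{m-n}` such that the evenly
spaced subcarrier sets `{d n i + j·2^{m-n} : j < 2^n}` are pairwise disjoint. -/
theorem stmt9 (m : ℕ) (a : ℕ → ℕ)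
    (hsum : ∑ n ∈ Finset.range (m + 1), a n * 2 ^ n ≤ 2 ^ m) :
    ∃ d : ℕ → ℕ → ℕ,
      (∀ n ≤ m, ∀ i < a n, d n i < 2 ^ (m - n)) ∧
      (∀ n ≤ m, ∀ i < a n, ∀ n' ≤ m, ∀ i' < a n', (n, i) ≠ (n', i') →
        Disjoint
          ((Finset.range (2 ^ n)).image (fun j => d n i + j * 2 ^ (m - n)))
          ((Finset.range (2 ^ n')).image (fun j => d n' i' + j * 2 ^ (m - n')))) := by
  refine ⟨fun n i => bitRev (m - n) (greedyIndex m a n i), fun n _ i _ => bitRev_lt _ _, ?_⟩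
  intro n hn i hi n' hn' i' hi' hne
  wlog hle : n ≤ n' generalizing n i n' i'
  · exact (this n' hn' i' hi' n hn i hi hne.symm (le_of_not_ge hle)).symm
  refine disjoint_image_add_mul_of_mod_ne _ _ (pow_dvd_pow 2 (by omega)) ?_
  refine bitRev_mod_two_pow_ne (by omega) (greedyIndex_lt m a hsum hn hi)
    (greedyIndex_lt m a hsum hn' hi') ?_
  rw [show m - n - (m - n') = n' - n by omega]
  exact greedyIndex_div_ne m a hle hn' hi' hne
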